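/- d₈(T²) ≤ 5/(8√2): the flat torus admits a partition into 8 congruent hexagons each of diameter 5/(8√2) = √(25/128). -/

import Mathlib

open scoped Real Pointwise

/-- The Euclidean (flat) distance on the torus `T² = ℝ²/ℤ²`. -/
noncomputable def torusDist (u v : AddCircle (1:ℝ) × AddCircle (1:ℝ)) : ℝ :=
  Real.sqrt (‖u.1 - v.1‖ ^ 2 + ‖u.2 - v.2‖ ^ 2)

/-- The diameter of a subset of the flat torus. -/
noncomputable def torusDiam (F : Set (AddCircle (1:ℝ) × AddCircle (1:ℝ))) : ℝ :=
  sSup {d | ∃ u ∈ F, ∃ v ∈ F, d = torusDist u v}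

/-- `d_m(T²)`: infimum of the maximal diameter over coverings of `T²` by `m` sets. -/
noncomputable def dTor (m : ℕ) : ℝ :=
  sInf {τ | ∃ F : Fin m → Set (AddCircle (1:ℝ) × AddCircle (1:ℝ)),
    (⋃ i, F i) = Set.univ ∧ ∀ i, torusDiam (F i) ≤ τ}

/-- The vertical line (circle) `l_x = {x} × T¹` on the flat torus. -/
def vline (x : ℝ) : Set (AddCircle (1:ℝ) × AddCircle (1:ℝ)) :=
  {p | p.1 = (x : AddCircle (1:ℝ))}

/-!
The lattice `Λ` spanned by `q₁ = (3/8, 1/8)` and `q₂ = (1/8, 3/8)` contains `ℤ²` with index 8, and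
`Λ / ℤ²` is cyclic, generated by `q₁`. The hexagon `|x + 3y| ≤ 5/8, |x - y| ≤ 1/4, |3x + y| ≤ 5/8`
(with side vectors `p₁, p₂, p₃`) contains a fundamental domain of `Λ`, which is found by reducing
`Λ`-coordinates to `[-1/2, 1/2]²` and moving the two corners that stick out. Its image in `T²` and
the translates by `i • q₁`, `i < 8`, therefore tile the torus. Two points of the hexagon differ by a
vector of the doubled hexagon, whose squared length is at most `25/128`, and the torus distance is
at most the planar one.
-/

namespace TorusD8

section Tiling

variable {G M ι : Type*} [AddCommGroup G] [AddCommGroup M]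
  (f : G →+ M) (L : AddSubgroup G) {ρ : G → G} {t : ι → G}

theorem iUnion_translates_eq_univ (hf : Function.Surjective f) (hρ : ∀ x, x - ρ x ∈ L)
    (ht : ∀ l ∈ L, ∃ i, l - t i ∈ f.ker) :
    ⋃ i, (f (t i) + ·) '' (f '' Set.range ρ) = Set.univ := by
  refine Set.eq_univ_of_forall fun z => ?_
  obtain ⟨x, rfl⟩ := hf z
  obtain ⟨i, hi⟩ := ht _ (hρ x)
  refine Set.mem_iUnion.2 ⟨i, f (ρ x), ⟨ρ x, Set.mem_range_self x, rfl⟩, ?_⟩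
  rw [f.mem_ker, map_sub, map_sub, sub_sub, sub_eq_zero] at hi
  simp only [hi, add_comm]

theorem disjoint_translates (hker : f.ker ≤ L) (hρ : ∀ x, x - ρ x ∈ L)
    (hρ_eq : ∀ x y, x - y ∈ L → ρ x = ρ y) (htL : ∀ i, t i ∈ L)
    (ht_inj : ∀ i j, t i - t j ∈ f.ker → i = j) (i j : ι) (hij : i ≠ j) :
    Disjoint ((f (t i) + ·) '' (f '' Set.range ρ)) ((f (t j) + ·) '' (f '' Set.range ρ)) := by
  rw [Set.disjoint_left]
  rintro _ ⟨_, ⟨_, ⟨a, rfl⟩, rfl⟩, rfl⟩ ⟨_, ⟨_, ⟨b, rfl⟩, rfl⟩, h⟩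
  have hd : t j + ρ b - (t i + ρ a) ∈ f.ker := by
    simp only at h
    rw [f.mem_ker, map_sub, map_add, map_add, h, sub_self]
  have hab : ρ b = ρ a := by
    have hL : ρ b - ρ a ∈ L := by
      convert L.sub_mem (hker hd) (L.sub_mem (htL j) (htL i)) using 1
      abel
    rw [hρ_eq _ _ (hρ b), hρ_eq _ _ (hρ a), hρ_eq _ _ hL]
  rw [hab, add_sub_add_right_eq_sub] at hd
  exact hij (ht_inj j i hd).symm

end Tiling

noncomputable def torusProj : ℝ × ℝ →+ AddCircle (1:ℝ) × AddCircle (1:ℝ) :=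
  (QuotientAddGroup.mk' _).prodMap (QuotientAddGroup.mk' _)

lemma torusProj_apply (x : ℝ × ℝ) :
    torusProj x = ((x.1 : AddCircle (1:ℝ)), (x.2 : AddCircle (1:ℝ))) :=
  rfl

lemma torusProj_surjective : Function.Surjective torusProj :=
  Function.Surjective.prodMap (QuotientAddGroup.mk'_surjective _)
    (QuotientAddGroup.mk'_surjective _)

lemma mem_ker_torusProj {x : ℝ × ℝ} : x ∈ torusProj.ker ↔ ∃ m n : ℤ, x = ((m : ℝ), (n : ℝ)) := by
  simp [torusProj, AddMonoidHom.ker_prodMap, AddSubgroup.mem_prod,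
    AddSubgroup.mem_zmultiples_iff, Prod.ext_iff, eq_comm]

lemma torusDist_add_left (z u v : AddCircle (1:ℝ) × AddCircle (1:ℝ)) :
    torusDist (z + u) (z + v) = torusDist u v := by
  simp only [torusDist, Prod.fst_add, Prod.snd_add, add_sub_add_left_eq_sub]

lemma torusDist_torusProj_le (x y : ℝ × ℝ) :
    torusDist (torusProj x) (torusProj y) ≤ √((x.1 - y.1) ^ 2 + (x.2 - y.2) ^ 2) := by
  have h1 : ‖((x.1 - y.1 : ℝ) : AddCircle (1:ℝ))‖ ≤ |x.1 - y.1| := QuotientAddGroup.norm_mk_le_norm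
  have h2 : ‖((x.2 - y.2 : ℝ) : AddCircle (1:ℝ))‖ ≤ |x.2 - y.2| := QuotientAddGroup.norm_mk_le_norm
  rw [torusDist, torusProj_apply, torusProj_apply, ← AddCircle.coe_sub, ← AddCircle.coe_sub,
    ← sq_abs (x.1 - y.1), ← sq_abs (x.2 - y.2)]
  gcongr

lemma torusDiam_le {F : Set (AddCircle (1:ℝ) × AddCircle (1:ℝ))} {τ : ℝ} (hτ : 0 ≤ τ)
    (h : ∀ u ∈ F, ∀ v ∈ F, torusDist u v ≤ τ) : torusDiam F ≤ τ :=
  Real.sSup_le (by rintro _ ⟨u, hu, v, hv, rfl⟩; exact h u hu v hv) hτ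

lemma torusDiam_nonneg (F : Set (AddCircle (1:ℝ) × AddCircle (1:ℝ))) : 0 ≤ torusDiam F :=
  Real.sSup_nonneg (by rintro _ ⟨u, -, v, -, rfl⟩; exact Real.sqrt_nonneg _)

lemma torusDiam_translate_image_le (z : AddCircle (1:ℝ) × AddCircle (1:ℝ)) {S : Set (ℝ × ℝ)}
    {τ : ℝ} (hτ : 0 ≤ τ) (hS : ∀ x ∈ S, ∀ y ∈ S, (x.1 - y.1) ^ 2 + (x.2 - y.2) ^ 2 ≤ τ ^ 2) :
    torusDiam ((z + ·) '' (torusProj '' S)) ≤ τ := by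
  refine torusDiam_le hτ ?_
  rintro _ ⟨_, ⟨x, hx, rfl⟩, rfl⟩ _ ⟨_, ⟨y, hy, rfl⟩, rfl⟩
  rw [torusDist_add_left]
  calc torusDist (torusProj x) (torusProj y) ≤ √((x.1 - y.1) ^ 2 + (x.2 - y.2) ^ 2) :=
        torusDist_torusProj_le x y
    _ ≤ √(τ ^ 2) := Real.sqrt_le_sqrt (hS x hx y hy)
    _ = τ := Real.sqrt_sq hτ

lemma dTor_le {m : ℕ} {τ : ℝ} (F : Fin m → Set (AddCircle (1:ℝ) × AddCircle (1:ℝ)))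
    (hcov : ⋃ i, F i = Set.univ) (hF : ∀ i, torusDiam (F i) ≤ τ) : dTor m ≤ τ := by
  refine csInf_le ⟨0, ?_⟩ ⟨F, hcov, hF⟩
  rintro σ ⟨F', hcov', hF'⟩
  obtain ⟨i, -⟩ := Set.mem_iUnion.1 (hcov'.symm ▸ Set.mem_univ 0)
  exact (torusDiam_nonneg _).trans (hF' i)

def hexagon : Set (ℝ × ℝ) :=
  {x | |x.1 + 3 * x.2| ≤ 5 / 8 ∧ |x.1 - x.2| ≤ 1 / 4 ∧ |3 * x.1 + x.2| ≤ 5 / 8}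

lemma sq_add_sq_le_of_abs_le {u v : ℝ} (hA : |u + 3 * v| ≤ 5 / 4) (hB : |u - v| ≤ 1 / 2)
    (hC : |3 * u + v| ≤ 5 / 4) : u ^ 2 + v ^ 2 ≤ 25 / 128 := by
  rw [abs_le] at hA hB hC
  have hP : 0 ≤ (5/4 - (u + 3*v)) * (1/2 - (u - v)) * (5/4 + (3*u + v)) := by
    apply mul_nonneg (mul_nonneg _ _) <;> linarith
  have hQ : 0 ≤ (5/4 + (u + 3*v)) * (1/2 + (u - v)) * (5/4 - (3*u + v)) := by
    apply mul_nonneg (mul_nonneg _ _) <;> linarith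
  -- the cubic terms cancel, since `3u + v = (u + 3v) + 2(u - v)`
  have hPQ : (5/4 - (u + 3*v)) * (1/2 - (u - v)) * (5/4 + (3*u + v)) +
      (5/4 + (u + 3*v)) * (1/2 + (u - v)) * (5/4 - (3*u + v)) = 25/16 - 8 * (u ^ 2 + v ^ 2) := by
    ring
  linarith

lemma sq_add_sq_sub_le_of_mem_hexagon {x y : ℝ × ℝ} (hx : x ∈ hexagon) (hy : y ∈ hexagon) :
    (x.1 - y.1) ^ 2 + (x.2 - y.2) ^ 2 ≤ 25 / 128 := by
  obtain ⟨hxA, hxB, hxC⟩ := hx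
  obtain ⟨hyA, hyB, hyC⟩ := hy
  apply sq_add_sq_le_of_abs_le
  · calc |x.1 - y.1 + 3 * (x.2 - y.2)| = |(x.1 + 3 * x.2) - (y.1 + 3 * y.2)| := by ring_nf
      _ ≤ |x.1 + 3 * x.2| + |y.1 + 3 * y.2| := abs_sub _ _
      _ ≤ 5 / 4 := by linarith
  · calc |x.1 - y.1 - (x.2 - y.2)| = |(x.1 - x.2) - (y.1 - y.2)| := by ring_nf
      _ ≤ |x.1 - x.2| + |y.1 - y.2| := abs_sub _ _
      _ ≤ 1 / 2 := by linarith
  · calc |3 * (x.1 - y.1) + (x.2 - y.2)| = |(3 * x.1 + x.2) - (3 * y.1 + y.2)| := by ring_nf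
      _ ≤ |3 * x.1 + x.2| + |3 * y.1 + y.2| := abs_sub _ _
      _ ≤ 5 / 4 := by linarith

/-- `w ↦ w.1 • q₁ + w.2 • q₂`. -/
noncomputable def ofLatticeCoords : ℝ × ℝ →+ ℝ × ℝ :=
  AddMonoidHom.mk' (fun w => ((3 * w.1 + w.2) / 8, (w.1 + 3 * w.2) / 8)) (by
    intro a b
    ext <;> simp only [Prod.fst_add, Prod.snd_add] <;> ring)

lemma ofLatticeCoords_apply (w : ℝ × ℝ) :
    ofLatticeCoords w = ((3 * w.1 + w.2) / 8, (w.1 + 3 * w.2) / 8) :=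
  rfl

/-- In lattice coordinates `hexagon` reads `|3u + 5v| ≤ 5/2, |u - v| ≤ 1, |5u + 3v| ≤ 5/2`. The
square `[-1/2, 1/2]²` leaves it only near the corners `±(1/2, 1/2)`, which are moved back by a unit
vector. -/
noncomputable def foldCorners (w : ℝ × ℝ) : ℝ × ℝ :=
  if 5 / 2 < 3 * w.1 + 5 * w.2 ∨ 5 / 2 < 5 * w.1 + 3 * w.2 then
    (if w.2 ≤ w.1 then (w.1 - 1, w.2) else (w.1, w.2 - 1))
  else if 3 * w.1 + 5 * w.2 < -(5 / 2) ∨ 5 * w.1 + 3 * w.2 < -(5 / 2) then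
    (if w.1 ≤ w.2 then (w.1 + 1, w.2) else (w.1, w.2 + 1))
  else w

lemma sub_foldCorners_mem_ker (w : ℝ × ℝ) : w - foldCorners w ∈ torusProj.ker := by
  rw [mem_ker_torusProj]
  unfold foldCorners
  split_ifs
  · exact ⟨1, 0, by ext <;> simp⟩
  · exact ⟨0, 1, by ext <;> simp⟩
  · exact ⟨-1, 0, by ext <;> simp⟩
  · exact ⟨0, -1, by ext <;> simp⟩
  · exact ⟨0, 0, by ext <;> simp⟩

lemma ofLatticeCoords_foldCorners_mem_hexagon {w : ℝ × ℝ} (h₁ : |w.1| ≤ 1 / 2)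
    (h₂ : |w.2| ≤ 1 / 2) : ofLatticeCoords (foldCorners w) ∈ hexagon := by
  rw [abs_le] at h₁ h₂
  unfold foldCorners
  split_ifs with hP hP' hN hN' <;>
    simp only [hexagon, Set.mem_ofPred_eq, ofLatticeCoords_apply, abs_le]
  · rcases hP with h | h <;> refine ⟨⟨?_, ?_⟩, ⟨?_, ?_⟩, ⟨?_, ?_⟩⟩ <;> linarith
  · rcases hP with h | h <;> refine ⟨⟨?_, ?_⟩, ⟨?_, ?_⟩, ⟨?_, ?_⟩⟩ <;> linarith
  · rcases hN with h | h <;> refine ⟨⟨?_, ?_⟩, ⟨?_, ?_⟩, ⟨?_, ?_⟩⟩ <;> linarith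
  · rcases hN with h | h <;> refine ⟨⟨?_, ?_⟩, ⟨?_, ?_⟩, ⟨?_, ?_⟩⟩ <;> linarith
  · simp only [not_or, not_lt] at hP hN
    refine ⟨⟨?_, ?_⟩, ⟨?_, ?_⟩, ⟨?_, ?_⟩⟩ <;> linarith

noncomputable def reduceLattice (w : ℝ × ℝ) : ℝ × ℝ :=
  foldCorners (w.1 - round w.1, w.2 - round w.2)

lemma sub_reduceLattice_mem_ker (w : ℝ × ℝ) : w - reduceLattice w ∈ torusProj.ker := by
  have hround : w - (w.1 - round w.1, w.2 - round w.2) ∈ torusProj.ker :=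
    mem_ker_torusProj.2 ⟨round w.1, round w.2, by ext <;> simp⟩
  have h := torusProj.ker.add_mem hround
    (sub_foldCorners_mem_ker (w.1 - round w.1, w.2 - round w.2))
  rwa [sub_add_sub_cancel] at h

lemma reduceLattice_eq_of_sub_mem_ker {x y : ℝ × ℝ} (h : x - y ∈ torusProj.ker) :
    reduceLattice x = reduceLattice y := by
  obtain ⟨m, n, hmn⟩ := mem_ker_torusProj.1 h
  rw [eq_add_of_sub_eq' hmn]
  simp only [reduceLattice, Prod.fst_add, Prod.snd_add, round_add_intCast, Int.cast_add,
    add_sub_add_right_eq_sub]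

lemma ofLatticeCoords_reduceLattice_mem_hexagon (w : ℝ × ℝ) :
    ofLatticeCoords (reduceLattice w) ∈ hexagon :=
  ofLatticeCoords_foldCorners_mem_hexagon (abs_sub_round _) (abs_sub_round _)

noncomputable def latticeProj : ℝ × ℝ →+ AddCircle (1:ℝ) × AddCircle (1:ℝ) :=
  torusProj.comp ofLatticeCoords

lemma mem_ker_latticeProj {w : ℝ × ℝ} :
    w ∈ latticeProj.ker ↔ ∃ m n : ℤ, ofLatticeCoords w = ((m : ℝ), (n : ℝ)) :=
  mem_ker_torusProj

lemma latticeProj_surjective : Function.Surjective latticeProj := by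
  refine torusProj_surjective.comp fun x => ⟨(3 * x.1 - x.2, 3 * x.2 - x.1), ?_⟩
  ext <;> simp only [ofLatticeCoords_apply] <;> ring

lemma ker_latticeProj_le : latticeProj.ker ≤ torusProj.ker := by
  intro w hw
  obtain ⟨m, n, hmn⟩ := mem_ker_latticeProj.1 hw
  rw [ofLatticeCoords_apply, Prod.ext_iff] at hmn
  refine mem_ker_torusProj.2 ⟨3 * m - n, 3 * n - m, ?_⟩
  ext <;> push_cast <;> linarith [hmn.1, hmn.2]

/-- Lattice coordinates of `i • q₁`. -/
def cosetRep (i : Fin 8) : ℝ × ℝ := ((i : ℝ), 0)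

lemma cosetRep_mem_ker (i : Fin 8) : cosetRep i ∈ torusProj.ker :=
  mem_ker_torusProj.2 ⟨i, 0, by simp [cosetRep]⟩

lemma exists_sub_cosetRep_mem_ker {l : ℝ × ℝ} (hl : l ∈ torusProj.ker) :
    ∃ i, l - cosetRep i ∈ latticeProj.ker := by
  obtain ⟨m, n, rfl⟩ := mem_ker_torusProj.1 hl
  obtain ⟨k, hk⟩ : ∃ k : ℕ, (k : ℤ) = (m + 3 * n) % 8 :=
    ⟨_, Int.toNat_of_nonneg (Int.emod_nonneg _ (by norm_num))⟩
  have hk8 : k < 8 := by omega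
  have hdiv : ((8 * ((m + 3 * n) / 8) + k : ℤ) : ℝ) = m + 3 * n := by
    rw [hk, Int.mul_ediv_add_emod]; push_cast; ring
  push_cast at hdiv
  refine ⟨⟨k, hk8⟩, mem_ker_latticeProj.2 ⟨3 * ((m + 3 * n) / 8) - n, (m + 3 * n) / 8, ?_⟩⟩
  simp only [cosetRep, ofLatticeCoords_apply, Prod.ext_iff, Prod.fst_sub, Prod.snd_sub]
  push_cast
  constructor <;> linarith

lemma eq_of_sub_cosetRep_mem_ker {i j : Fin 8} (h : cosetRep i - cosetRep j ∈ latticeProj.ker) :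
    i = j := by
  obtain ⟨m, n, hmn⟩ := mem_ker_latticeProj.1 h
  have h8 : ((i : ℕ) : ℝ) - (j : ℕ) = 8 * n := by
    have := (Prod.ext_iff.1 hmn).2
    simp only [cosetRep, ofLatticeCoords_apply, Prod.fst_sub, Prod.snd_sub] at this
    linarith
  have h8' : ((i : ℕ) : ℤ) - (j : ℕ) = 8 * n := by exact_mod_cast h8
  omega

end TorusD8

theorem torus_d8_upper :
    (∃ (H : Set (AddCircle (1:ℝ) × AddCircle (1:ℝ)))
        (t : Fin 8 → AddCircle (1:ℝ) × AddCircle (1:ℝ)),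
        (⋃ i, (t i + ·) '' H) = Set.univ ∧
        (∀ i j, i ≠ j → Disjoint ((t i + ·) '' H) ((t j + ·) '' H)) ∧
        ∀ i, torusDiam ((t i + ·) '' H) ≤ 5 / (8 * Real.sqrt 2)) ∧
      dTor 8 ≤ 5 / (8 * Real.sqrt 2) := by
  open TorusD8 in
  have hcover := iUnion_translates_eq_univ latticeProj torusProj.ker latticeProj_surjective
    sub_reduceLattice_mem_ker fun _ => exists_sub_cosetRep_mem_ker
  have hdisjoint := disjoint_translates latticeProj torusProj.ker ker_latticeProj_le
    sub_reduceLattice_mem_ker (fun _ _ => reduceLattice_eq_of_sub_mem_ker) cosetRep_mem_ker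
    fun _ _ => eq_of_sub_cosetRep_mem_ker
  have hdiam : ∀ i, torusDiam ((latticeProj (cosetRep i) + ·) ''
      (latticeProj '' Set.range reduceLattice)) ≤ 5 / (8 * Real.sqrt 2) := by
    intro i
    rw [latticeProj, AddMonoidHom.coe_comp, Set.image_comp]
    refine torusDiam_translate_image_le _ (by positivity) ?_
    rintro _ ⟨_, ⟨a, rfl⟩, rfl⟩ _ ⟨_, ⟨b, rfl⟩, rfl⟩
    convert sq_add_sq_sub_le_of_mem_hexagon (ofLatticeCoords_reduceLattice_mem_hexagon a)
      (ofLatticeCoords_reduceLattice_mem_hexagon b) using 1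
    norm_num [div_pow, mul_pow]
  exact ⟨⟨_, _, hcover, hdisjoint, hdiam⟩, dTor_le _ hcover hdiam⟩
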